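/- Let n ≥ 1 be an integer, t > 0 and λ a nonzero real number. For every pair of multi-indices α, β ∈ ℕ₀^n there exists f ∈ L²(ℝ^{2n}) such that H_t^λ f(z,w) = z^α w^β exp(-(λ/4)·coth(2tλ)·(z·z + w·w)) for all (z,w) ∈ ℂ^{2n}; that is, every such polynomial times the Gaussian factor lies in the image of the λ-twisted heat kernel transform. -/

import Mathlib

open MeasureTheory Complex Filter Topology

noncomputable section

/-- Real hyperbolic cotangent. -/
def cothR (x : ℝ) : ℝ := Real.cosh x / Real.sinh x

/-- Bilinear dot product on `ℂ^n`: `z · w = ∑ j, z j * w j`. -/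
def dotC {n : ℕ} (z w : Fin n → ℂ) : ℂ := ∑ j, z j * w j

/-- Embedding `ℝ^n → ℂ^n`. -/
def embC {n : ℕ} (x : Fin n → ℝ) : Fin n → ℂ := fun j => (x j : ℂ)

/-- The twisted heat kernel `p_t^λ` on `ℂ^{2n}`. -/
def pC (n : ℕ) (t lam : ℝ) (z w : Fin n → ℂ) : ℂ :=
  (((4 * Real.pi) ^ n)⁻¹ : ℝ) * (((lam / Real.sinh (t * lam)) ^ n : ℝ) : ℂ) *
    Complex.exp (((-(lam / 4) * cothR (t * lam) : ℝ) : ℂ) * (dotC z z + dotC w w))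

/-- The λ-twisted heat kernel transform. -/
def HT (n : ℕ) (t lam : ℝ) (f : (Fin n → ℝ) × (Fin n → ℝ) → ℂ) (z w : Fin n → ℂ) : ℂ :=
  ∫ p : (Fin n → ℝ) × (Fin n → ℝ),
    f p * pC n t lam (z - embC p.1) (w - embC p.2) *
      Complex.exp (-(Complex.I * lam / 2) * (dotC (embC p.1) w - dotC (embC p.2) z))

/-!
Write `c = (λ/4) coth(tλ)`. The Gaussian factors of `f`, of `p_t^λ` and of the twist combine into
`exp(-c (z·z + w·w))` times, in each real coordinate `y`, a Gaussian `exp(-2c y² + Λ y)` whose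
frequencies `Λ = (2cz - iλw/2, 2cw + iλz/2)` depend linearly and invertibly on `(z, w)`.
Against `exp(-b y² + L y)` the rescaled Hermite polynomials `Hₖ` integrate to `(L/2b)ᵏ` times the
Gaussian integral, so replacing each monomial `Xˢ` of a polynomial `P` by `∏ᵢ H_{sᵢ}(yᵢ)` gives an
`L²` function whose transform is `P(Λ/4c)` times a Gaussian in `(z, w)`. Taking for `P` the
monomial `z^α w^β` rewritten in the variables `Λ/4c`, the exponents add up to
`-c + (4c² - λ²/4)/(8c) = -(λ/4) coth(2tλ)`.
-/

open Polynomial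

def quadExp (b L : ℂ) (y : ℝ) : ℂ := cexp (-b * (y : ℂ) ^ 2 + L * y)

lemma norm_quadExp (b L : ℂ) (y : ℝ) :
    ‖quadExp b L y‖ = Real.exp (-b.re * y ^ 2 + L.re * y) := by
  rw [quadExp, Complex.norm_exp]
  simp [← Complex.ofReal_pow]

lemma quadExp_sq (b L : ℂ) (y : ℝ) : quadExp b L y ^ 2 = quadExp (2 * b) (2 * L) y := by
  simp only [quadExp, sq, ← Complex.exp_add]
  ring_nf

lemma hasDerivAt_quadExp (b L : ℂ) (y : ℝ) :
    HasDerivAt (quadExp b L) (quadExp b L y * (-2 * b * y + L)) y := by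
  have h := ((hasDerivAt_pow 2 (y : ℂ)).const_mul (-b)).fun_add
    ((hasDerivAt_id' (y : ℂ)).const_mul L)
  exact h.cexp.comp_ofReal.congr_deriv (by simp [quadExp]; ring)

lemma integrable_quadExp {b : ℂ} (hb : 0 < b.re) (L : ℂ) : Integrable (quadExp b L) := by
  have h := integrable_cexp_quadratic hb L 0
  simp only [add_zero] at h
  exact h

lemma integral_quadExp {b : ℂ} (hb : 0 < b.re) (L : ℂ) :
    ∫ y : ℝ, quadExp b L y = (Real.pi / b) ^ (1 / 2 : ℂ) * cexp (L ^ 2 / (4 * b)) := by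
  have h := integral_cexp_quadratic (b := -b) (by simpa using hb) L 0
  simp only [add_zero, neg_neg, zero_sub, mul_neg, div_neg] at h
  exact h

lemma integrable_pow_mul_quadExp {b : ℂ} (hb : 0 < b.re) (L : ℂ) (k : ℕ) :
    Integrable fun y : ℝ => (y : ℂ) ^ k * quadExp b L y := by
  refine Integrable.mono'
    ((((integrable_quadExp hb (L + 1)).norm).add (integrable_quadExp hb (L - 1)).norm).const_mul
      (k.factorial : ℝ)) (by unfold quadExp; fun_prop) (Eventually.of_forall fun y => ?_)
  -- `|y|^k ≤ k! e^{|y|} ≤ k! (e^y + e^{-y})`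
  have hexp : Real.exp |y| ≤ Real.exp y + Real.exp (-y) := by
    rcases abs_choice y with h | h <;> rw [h] <;> linarith [Real.exp_pos y, Real.exp_pos (-y)]
  have hpow : |y| ^ k ≤ k.factorial * (Real.exp y + Real.exp (-y)) := by
    have := Real.pow_div_factorial_le_exp |y| (abs_nonneg y) k
    rw [div_le_iff₀ (by positivity), mul_comm] at this
    exact this.trans (by gcongr)
  simp only [Pi.add_apply, norm_mul, norm_pow, Complex.norm_real, Real.norm_eq_abs, norm_quadExp,
    Complex.add_re, Complex.sub_re, Complex.one_re]
  calc |y| ^ k * Real.exp (-b.re * y ^ 2 + L.re * y)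
      ≤ k.factorial * (Real.exp y + Real.exp (-y)) * Real.exp (-b.re * y ^ 2 + L.re * y) := by
        gcongr
    _ = _ := by rw [mul_assoc, add_mul, ← Real.exp_add, ← Real.exp_add]; ring_nf

lemma integrable_eval_mul_quadExp (p : ℂ[X]) {b : ℂ} (hb : 0 < b.re) (L : ℂ) :
    Integrable fun y : ℝ => p.eval (y : ℂ) * quadExp b L y := by
  simp_rw [eval_eq_sum_range, Finset.sum_mul, mul_assoc]
  exact integrable_finsetSum _ fun k _ => (integrable_pow_mul_quadExp hb L k).const_mul _

lemma hasDerivAt_eval_mul_quadExp (p : ℂ[X]) (b L : ℂ) (y : ℝ) :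
    HasDerivAt (fun y : ℝ => p.eval (y : ℂ) * quadExp b L y)
      ((derivative p + (C L - C (2 * b) * X) * p).eval (y : ℂ) * quadExp b L y) y := by
  refine ((p.hasDerivAt (y : ℂ)).comp_ofReal.mul (hasDerivAt_quadExp b L y)).congr_deriv ?_
  simp only [eval_add, eval_mul, eval_sub, eval_C, eval_X]
  ring

/-- Rescaled probabilists' Hermite polynomials, `Hₖ(x) = (2b)^{-k/2} Heₖ(√(2b) x)`. -/
def gaussHermite (b : ℂ) : ℕ → ℂ[X]
  | 0 => 1
  | k + 1 => X * gaussHermite b k - C (2 * b)⁻¹ * derivative (gaussHermite b k)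

lemma integral_gaussHermite_succ_mul_quadExp {b : ℂ} (hb : 0 < b.re) (L : ℂ) (k : ℕ) :
    ∫ y : ℝ, (gaussHermite b (k + 1)).eval (y : ℂ) * quadExp b L y
      = L / (2 * b) * ∫ y : ℝ, (gaussHermite b k).eval (y : ℂ) * quadExp b L y := by
  have hb0 : b ≠ 0 := fun h => by simp [h] at hb
  set H := gaussHermite b k
  have hderiv : derivative H + (C L - C (2 * b) * X) * H
      = C L * H - C (2 * b) * gaussHermite b (k + 1) := by
    simp only [gaussHermite, H, mul_sub, ← mul_assoc, ← C_mul,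
      mul_inv_cancel₀ (mul_ne_zero two_ne_zero hb0), C_1, one_mul]
    ring
  -- the derivative `(L Hₖ - 2b Hₖ₊₁) · quadExp b L` of `Hₖ · quadExp b L` integrates to zero
  have hzero := integral_eq_zero_of_hasDerivAt_of_integrable
    (fun y => hasDerivAt_eval_mul_quadExp H b L y)
    (integrable_eval_mul_quadExp _ hb L) (integrable_eval_mul_quadExp H hb L)
  rw [hderiv] at hzero
  simp only [eval_sub, eval_mul, eval_C, sub_mul, mul_assoc L, mul_assoc (2 * b)] at hzero
  rw [integral_sub ((integrable_eval_mul_quadExp H hb L).const_mul L)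
    ((integrable_eval_mul_quadExp _ hb L).const_mul (2 * b)), integral_const_mul,
    integral_const_mul, sub_eq_zero] at hzero
  rw [div_mul_eq_mul_div, hzero]
  field_simp

lemma integral_gaussHermite_mul_quadExp {b : ℂ} (hb : 0 < b.re) (L : ℂ) (k : ℕ) :
    ∫ y : ℝ, (gaussHermite b k).eval (y : ℂ) * quadExp b L y
      = (L / (2 * b)) ^ k * ∫ y : ℝ, quadExp b L y := by
  induction k with
  | zero => simp [gaussHermite]
  | succ k ih => rw [integral_gaussHermite_succ_mul_quadExp hb, ih, pow_succ]; ring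

section SumElim

variable {ι ι' E : Type*} [Fintype ι] [Fintype ι'] [MeasureSpace E]
  [SigmaFinite (volume : Measure E)]

lemma integrable_prod_sumElim {g : ι ⊕ ι' → E → ℂ} (hg : ∀ i, Integrable (g i)) :
    Integrable fun p : (ι → E) × (ι' → E) => ∏ i, g i (Sum.elim p.1 p.2 i) := by
  simp only [Fintype.prod_sum_type, Sum.elim_inl, Sum.elim_inr, Measure.volume_eq_prod]
  exact (Integrable.fintype_prod fun j => hg _).mul_prod (Integrable.fintype_prod fun j => hg _)

lemma integral_prod_sumElim (g : ι ⊕ ι' → E → ℂ) :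
    ∫ p : (ι → E) × (ι' → E), ∏ i, g i (Sum.elim p.1 p.2 i) = ∏ i, ∫ y, g i y := by
  simp only [Fintype.prod_sum_type, Sum.elim_inl, Sum.elim_inr, Measure.volume_eq_prod]
  refine (integral_prod_mul (fun x : ι → E => ∏ j, g (.inl j) (x j))
    (fun x : ι' → E => ∏ j, g (.inr j) (x j))).trans ?_
  rw [integral_fintype_prod_volume_eq_prod, integral_fintype_prod_volume_eq_prod]

lemma memLp_two_prod_sumElim {g : ι ⊕ ι' → E → ℂ} (hg : ∀ i, Integrable (g i))
    (hg2 : ∀ i, Integrable fun y => g i y ^ 2) :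
    MemLp (fun p : (ι → E) × (ι' → E) => ∏ i, g i (Sum.elim p.1 p.2 i)) 2 := by
  rw [memLp_two_iff_integrable_sq_norm (integrable_prod_sumElim hg).1]
  simpa only [← norm_pow, Finset.prod_pow] using (integrable_prod_sumElim hg2).norm

end SumElim

def hermiteLift {σ : Type*} [Fintype σ] (b : ℂ) (P : MvPolynomial σ ℂ) (q : σ → ℝ) : ℂ :=
  ∑ s ∈ P.support, P.coeff s * ∏ i, (gaussHermite b (s i)).eval (q i : ℂ)

lemma hermiteLift_mul_prod {σ : Type*} [Fintype σ] (b : ℂ) (P : MvPolynomial σ ℂ)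
    (φ : σ → ℝ → ℂ) (q : σ → ℝ) :
    hermiteLift b P q * ∏ i, φ i (q i)
      = ∑ s ∈ P.support, P.coeff s * ∏ i, (gaussHermite b (s i)).eval (q i : ℂ) * φ i (q i) := by
  simp only [hermiteLift, Finset.sum_mul, Finset.prod_mul_distrib, mul_assoc]

section HermiteLift

variable {ι ι' : Type*} [Fintype ι] [Fintype ι']

lemma integral_hermiteLift_mul_quadExp {b : ℂ} (hb : 0 < b.re) (Λ : ι ⊕ ι' → ℂ)
    (P : MvPolynomial (ι ⊕ ι') ℂ) :
    ∫ p : (ι → ℝ) × (ι' → ℝ),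
        hermiteLift b P (Sum.elim p.1 p.2) * ∏ i, quadExp b (Λ i) (Sum.elim p.1 p.2 i)
      = P.eval (fun i => Λ i / (2 * b)) * ∏ i, ∫ y : ℝ, quadExp b (Λ i) y := by
  simp_rw [hermiteLift_mul_prod]
  rw [integral_finsetSum _ fun s _ =>
    (integrable_prod_sumElim fun i => integrable_eval_mul_quadExp _ hb (Λ i)).const_mul _,
    MvPolynomial.eval_eq', Finset.sum_mul]
  refine Finset.sum_congr rfl fun s _ => ?_
  rw [integral_const_mul, integral_prod_sumElim
    (fun i (y : ℝ) => (gaussHermite b (s i)).eval (y : ℂ) * quadExp b (Λ i) y)]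
  simp_rw [integral_gaussHermite_mul_quadExp hb, Finset.prod_mul_distrib, mul_assoc]

lemma memLp_hermiteLift_mul_quadExp (b : ℂ) {b' : ℂ} (hb' : 0 < b'.re) (Λ : ι ⊕ ι' → ℂ)
    (P : MvPolynomial (ι ⊕ ι') ℂ) :
    MemLp (fun p : (ι → ℝ) × (ι' → ℝ) =>
      hermiteLift b P (Sum.elim p.1 p.2) * ∏ i, quadExp b' (Λ i) (Sum.elim p.1 p.2 i)) 2 := by
  simp_rw [hermiteLift_mul_prod]
  refine memLp_finsetSum _ fun s _ => MemLp.const_mul ?_ _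
  refine memLp_two_prod_sumElim (fun i => integrable_eval_mul_quadExp _ hb' _) fun i => ?_
  have h2b' : 0 < (2 * b').re := by simpa using hb'
  simpa only [mul_pow, ← eval_pow, quadExp_sq] using
    integrable_eval_mul_quadExp (gaussHermite b (s i) ^ 2) h2b' (2 * Λ i)

end HermiteLift

def heatCoeff (t lam : ℝ) : ℝ := lam / 4 * cothR (t * lam)

lemma heatCoeff_pos {t lam : ℝ} (ht : 0 < t) (hlam : lam ≠ 0) : 0 < heatCoeff t lam := by
  have hq : 0 < lam / Real.sinh (t * lam) := by
    rcases hlam.lt_or_gt with h | h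
    · exact div_pos_of_neg_of_neg h (Real.sinh_neg_iff.2 (mul_neg_of_pos_of_neg ht h))
    · exact div_pos h (Real.sinh_pos_iff.2 (mul_pos ht h))
  have : heatCoeff t lam = Real.cosh (t * lam) / 4 * (lam / Real.sinh (t * lam)) := by
    unfold heatCoeff cothR; ring
  rw [this]
  positivity

lemma four_mul_heatCoeff_sq_sub_pos {t lam : ℝ} (h : t * lam ≠ 0) :
    0 < 4 * heatCoeff t lam ^ 2 - (lam / 2) ^ 2 := by
  have hs : Real.sinh (t * lam) ≠ 0 := Real.sinh_ne_zero.2 h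
  have hlam : lam ≠ 0 := right_ne_zero_of_mul h
  have : 4 * heatCoeff t lam ^ 2 - (lam / 2) ^ 2 = (lam / (2 * Real.sinh (t * lam))) ^ 2 := by
    unfold heatCoeff cothR
    generalize t * lam = x at hs ⊢
    field_simp
    linear_combination 4 * Real.cosh_sq_sub_sinh_sq x
  rw [this]
  positivity

lemma neg_heatCoeff_add {t lam : ℝ} (h : t * lam ≠ 0) :
    -heatCoeff t lam + (4 * heatCoeff t lam ^ 2 - (lam / 2) ^ 2) / (8 * heatCoeff t lam)
      = -(lam / 4) * cothR (2 * t * lam) := by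
  have hs : Real.sinh (t * lam) ≠ 0 := Real.sinh_ne_zero.2 h
  unfold heatCoeff cothR
  rw [mul_assoc, Real.sinh_two_mul, Real.cosh_two_mul]
  generalize t * lam = x at hs ⊢
  field_simp
  ring

def twistFreq {n : ℕ} (c lam : ℂ) (z w : Fin n → ℂ) : Fin n ⊕ Fin n → ℂ :=
  Sum.elim (fun j => 2 * c * z j - I * (lam / 2) * w j) (fun j => 2 * c * w j + I * (lam / 2) * z j)

/-- `z^α w^β` in the variables `twistFreq c lam z w / (4c)`. -/
def twistedMonomial {n : ℕ} (c lam : ℂ) (α β : Fin n → ℕ) : MvPolynomial (Fin n ⊕ Fin n) ℂ :=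
  let a := 8 * c ^ 2 / (4 * c ^ 2 - (lam / 2) ^ 2)
  let b := 2 * I * lam * c / (4 * c ^ 2 - (lam / 2) ^ 2)
  ∏ j, (.C a * .X (.inl j) + .C b * .X (.inr j)) ^ α j *
    (.C a * .X (.inr j) - .C b * .X (.inl j)) ^ β j

section Twist

variable {n : ℕ} (c lam : ℂ) (z w : Fin n → ℂ)

lemma prod_quadExp_mul_exp_twist (x u : Fin n → ℝ) :
    (∏ i, quadExp c 0 (Sum.elim x u i))
        * cexp (-c * (dotC (z - embC x) (z - embC x) + dotC (w - embC u) (w - embC u)))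
        * cexp (-(I * lam / 2) * (dotC (embC x) w - dotC (embC u) z))
      = cexp (-c * (dotC z z + dotC w w))
        * ∏ i, quadExp (2 * c) (twistFreq c lam z w i) (Sum.elim x u i) := by
  simp only [quadExp, ← Complex.exp_sum, ← Complex.exp_add, Fintype.sum_sum_type, Sum.elim_inl,
    Sum.elim_inr, twistFreq, dotC, embC, Pi.sub_apply, Finset.mul_sum, ← Finset.sum_add_distrib,
    ← Finset.sum_sub_distrib]
  congr 1
  refine Finset.sum_congr rfl fun j _ => ?_
  ring

lemma sum_twistFreq_sq :
    ∑ i, twistFreq c lam z w i ^ 2 = (4 * c ^ 2 - (lam / 2) ^ 2) * (dotC z z + dotC w w) := by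
  simp only [Fintype.sum_sum_type, twistFreq, Sum.elim_inl, Sum.elim_inr, dotC, mul_add,
    Finset.mul_sum, ← Finset.sum_add_distrib]
  refine Finset.sum_congr rfl fun j _ => ?_
  linear_combination ((lam / 2) ^ 2 * (z j ^ 2 + w j ^ 2)) * I_sq

lemma prod_integral_quadExp_twistFreq (hc : 0 < c.re) :
    ∏ i, ∫ y : ℝ, quadExp (2 * c) (twistFreq c lam z w i) y
      = (Real.pi / (2 * c)) ^ n
        * cexp ((4 * c ^ 2 - (lam / 2) ^ 2) / (8 * c) * (dotC z z + dotC w w)) := by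
  have h2c : 0 < (2 * c).re := by simpa using hc
  simp_rw [integral_quadExp h2c, Finset.prod_mul_distrib, Finset.prod_const, Finset.card_univ,
    Fintype.card_sum, Fintype.card_fin, ← Complex.exp_sum, ← Finset.sum_div, sum_twistFreq_sq,
    ← two_mul, pow_mul, one_div, Complex.cpow_ofNat_inv_pow]
  congr 2
  ring

lemma twistFreq_solve_left (hc : c ≠ 0) (hD : 4 * c ^ 2 - (lam / 2) ^ 2 ≠ 0) (j : Fin n) :
    8 * c ^ 2 / (4 * c ^ 2 - (lam / 2) ^ 2) * (twistFreq c lam z w (.inl j) / (4 * c))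
      + 2 * I * lam * c / (4 * c ^ 2 - (lam / 2) ^ 2) * (twistFreq c lam z w (.inr j) / (4 * c))
      = z j := by
  simp only [twistFreq, Sum.elim_inl, Sum.elim_inr]
  rw [div_mul_div_comm, div_mul_div_comm, ← add_div,
    div_eq_iff (mul_ne_zero hD (by simpa using hc))]
  linear_combination (lam ^ 2 * c * z j) * I_sq

lemma twistFreq_solve_right (hc : c ≠ 0) (hD : 4 * c ^ 2 - (lam / 2) ^ 2 ≠ 0) (j : Fin n) :
    8 * c ^ 2 / (4 * c ^ 2 - (lam / 2) ^ 2) * (twistFreq c lam z w (.inr j) / (4 * c))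
      - 2 * I * lam * c / (4 * c ^ 2 - (lam / 2) ^ 2) * (twistFreq c lam z w (.inl j) / (4 * c))
      = w j := by
  simp only [twistFreq, Sum.elim_inl, Sum.elim_inr]
  rw [div_mul_div_comm, div_mul_div_comm, ← sub_div,
    div_eq_iff (mul_ne_zero hD (by simpa using hc))]
  linear_combination (lam ^ 2 * c * w j) * I_sq

lemma eval_twistedMonomial (hc : c ≠ 0) (hD : 4 * c ^ 2 - (lam / 2) ^ 2 ≠ 0)
    (α β : Fin n → ℕ) :
    (twistedMonomial c lam α β).eval (fun i => twistFreq c lam z w i / (4 * c))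
      = (∏ j, z j ^ α j) * ∏ j, w j ^ β j := by
  simp only [twistedMonomial, map_prod, map_mul, map_pow, map_add, map_sub, MvPolynomial.eval_C,
    MvPolynomial.eval_X, twistFreq_solve_left c lam z w hc hD,
    twistFreq_solve_right c lam z w hc hD, Finset.prod_mul_distrib]

end Twist

lemma HT_hermiteLift_mul_quadExp (n : ℕ) (t lam : ℝ) (hc : 0 < heatCoeff t lam)
    (P : MvPolynomial (Fin n ⊕ Fin n) ℂ) (z w : Fin n → ℂ) :
    HT n t lam (fun p => hermiteLift (2 * heatCoeff t lam) P (Sum.elim p.1 p.2)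
        * ∏ i, quadExp (heatCoeff t lam) 0 (Sum.elim p.1 p.2 i)) z w
      = (((4 * Real.pi) ^ n)⁻¹ : ℝ) * (((lam / Real.sinh (t * lam)) ^ n : ℝ) : ℂ)
        * cexp (-heatCoeff t lam * (dotC z z + dotC w w))
        * P.eval (fun i => twistFreq (heatCoeff t lam) lam z w i / (4 * heatCoeff t lam))
        * ∏ i, ∫ y : ℝ,
            quadExp (2 * heatCoeff t lam) (twistFreq (heatCoeff t lam) lam z w i) y := by
  set c := heatCoeff t lam
  have hpC : ((-(lam / 4) * cothR (t * lam) : ℝ) : ℂ) = -(c : ℂ) := by simp [c, heatCoeff]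
  have hintegrand (p : (Fin n → ℝ) × (Fin n → ℝ)) :
      (hermiteLift (2 * c) P (Sum.elim p.1 p.2) * ∏ i, quadExp c 0 (Sum.elim p.1 p.2 i))
          * pC n t lam (z - embC p.1) (w - embC p.2)
          * cexp (-(I * lam / 2) * (dotC (embC p.1) w - dotC (embC p.2) z))
        = (((4 * Real.pi) ^ n)⁻¹ : ℝ) * (((lam / Real.sinh (t * lam)) ^ n : ℝ) : ℂ)
          * cexp (-c * (dotC z z + dotC w w))
          * (hermiteLift (2 * c) P (Sum.elim p.1 p.2)
            * ∏ i, quadExp (2 * c) (twistFreq c lam z w i) (Sum.elim p.1 p.2 i)) := by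
    rw [pC, hpC]
    linear_combination (((4 * Real.pi) ^ n)⁻¹ : ℝ) * (((lam / Real.sinh (t * lam)) ^ n : ℝ) : ℂ)
      * hermiteLift (2 * c) P (Sum.elim p.1 p.2)
      * prod_quadExp_mul_exp_twist (c : ℂ) lam z w p.1 p.2
  simp only [HT]
  simp_rw [hintegrand]
  rw [integral_const_mul, integral_hermiteLift_mul_quadExp (by simpa using hc),
    show (2 : ℂ) * (2 * c) = 4 * c by ring]
  ring

theorem monomial_Gaussian_in_image_general
    (n : ℕ) (t lam : ℝ) (ht : 0 < t) (hlam : lam ≠ 0)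
    (α β : Fin n → ℕ) :
    ∃ f : (Fin n → ℝ) × (Fin n → ℝ) → ℂ, MemLp f 2 volume ∧
      ∀ z w : Fin n → ℂ,
        HT n t lam f z w =
          (∏ j, z j ^ α j) * (∏ j, w j ^ β j) *
            Complex.exp (((-(lam / 4) * cothR (2 * t * lam) : ℝ) : ℂ) *
              (dotC z z + dotC w w)) := by
  set c := heatCoeff t lam with hc_def
  have hc : 0 < c := heatCoeff_pos ht hlam
  have htlam : t * lam ≠ 0 := mul_ne_zero ht.ne' hlam
  set A : ℂ := (((4 * Real.pi) ^ n)⁻¹ : ℝ) * (((lam / Real.sinh (t * lam)) ^ n : ℝ) : ℂ)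
    with hA_def
  have hK : A * (Real.pi / (2 * c) : ℂ) ^ n ≠ 0 :=
    mul_ne_zero (mul_ne_zero (Complex.ofReal_ne_zero.2 (by positivity)) (Complex.ofReal_ne_zero.2
      (pow_ne_zero _ (div_ne_zero hlam (Real.sinh_ne_zero.2 htlam)))))
      (pow_ne_zero n (by simp [Real.pi_ne_zero, hc.ne']))
  let P : MvPolynomial (Fin n ⊕ Fin n) ℂ :=
    .C (A * (Real.pi / (2 * c)) ^ n)⁻¹ * twistedMonomial c lam α β
  refine ⟨fun p => hermiteLift (2 * c) P (Sum.elim p.1 p.2) * ∏ i, quadExp c 0 (Sum.elim p.1 p.2 i),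
    memLp_hermiteLift_mul_quadExp (2 * c) (by simpa using hc) 0 P, fun z w => ?_⟩
  rw [HT_hermiteLift_mul_quadExp n t lam hc, map_mul, MvPolynomial.eval_C,
    eval_twistedMonomial _ _ _ _ (by exact_mod_cast hc.ne')
      (by exact_mod_cast (four_mul_heatCoeff_sq_sub_pos htlam).ne'),
    prod_integral_quadExp_twistFreq _ _ _ _ (by simpa using hc), ← neg_heatCoeff_add htlam,
    ← hc_def, ← hA_def]
  push_cast
  rw [add_mul, Complex.exp_add]
  linear_combination ((∏ j, z j ^ α j) * (∏ j, w j ^ β j) * cexp (-c * (dotC z z + dotC w w))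
    * cexp ((4 * c ^ 2 - (lam / 2) ^ 2) / (8 * c) * (dotC z z + dotC w w))) * mul_inv_cancel₀ hK

/-- For every pair of multi-indices `α, β ∈ ℕ₀^n` there exists `f ∈ L²(ℝ^{2n})`
with `H_t^λ f(z,w) = z^α w^β exp(-(λ/4)·coth(2tλ)·(z·z + w·w))` for all `(z,w) ∈ ℂ^{2n}`. -/
theorem monomial_Gaussian_in_image
    (n : ℕ) (hn : 1 ≤ n) (t lam : ℝ) (ht : 0 < t) (hlam : lam ≠ 0)
    (α β : Fin n → ℕ) :
    ∃ f : (Fin n → ℝ) × (Fin n → ℝ) → ℂ, MemLp f 2 volume ∧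
      ∀ z w : Fin n → ℂ,
        HT n t lam f z w =
          (∏ j, z j ^ α j) * (∏ j, w j ^ β j) *
            Complex.exp (((-(lam / 4) * cothR (2 * t * lam) : ℝ) : ℂ) *
              (dotC z z + dotC w w)) :=
  monomial_Gaussian_in_image_general n t lam ht hlam α β
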